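/- Let Φ be a simply laced root system and α, β orthogonal roots. The number of positive roots γ with κ(α,γ) = -κ(β,γ) = ±1 equals 2(n_{α+β} - 1), where n_{α+β} is the number of unordered pairs of roots summing to α+β. -/

import Mathlib

open scoped RealInnerProductSpace

/-!
The roots `γ ≠ α, β` with `α + β - γ` a root are exactly those with `κ(α,γ) = κ(β,γ) = 1`, and
`γ ↦ α + β - γ` pairs them up without fixed points, so `2 n_{α+β}` is their number plus `2`.
Translation by `β` maps `{γ | κ(α,γ) = 1, κ(β,γ) = -1}` onto them, and the positive roots counted
on the left are this set and its negative, each root taken with the sign that makes it positive.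
-/

theorem two_mul_ncard_image_pair_eq_card {X : Type*} (s : Finset X) (σ : X → X)
    (hσ : ∀ x ∈ s, σ x ∈ s) (hinv : ∀ x ∈ s, σ (σ x) = x) (hfree : ∀ x ∈ s, σ x ≠ x) :
    2 * ((fun x => ({x, σ x} : Set X)) '' s).ncard = s.card := by
  classical
  set f : X → Set X := fun x => {x, σ x}
  have hfiber : ∀ x ∈ s, (s.filter fun y => f y = f x) = {x, σ x} := by
    intro x hx
    ext y
    simp only [Finset.mem_filter, Finset.mem_insert, Finset.mem_singleton]
    constructor
    · rintro ⟨-, hy⟩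
      have hyx : y ∈ f x := hy ▸ Set.mem_insert y {σ y}
      simpa [f] using hyx
    · rintro (rfl | rfl)
      · exact ⟨hx, rfl⟩
      · exact ⟨hσ x hx, by simp only [f, hinv x hx, Set.pair_comm]⟩
  rw [← Finset.coe_image, Set.ncard_coe_finset, Finset.card_eq_sum_card_image f s,
    Finset.sum_congr rfl (g := fun _ => 2), Finset.sum_const, smul_eq_mul, mul_comm]
  simp only [Finset.forall_mem_image]
  intro x hx
  rw [hfiber x hx, Finset.card_pair (hfree x hx).symm]

theorem two_mul_ncard_pairs_add_eq {G : Type*} [AddCommGroup G] [DecidableEq G] (Φ : Finset G)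
    (c : G) (hfree : ∀ γ ∈ Φ, γ + γ ≠ c) :
    2 * {S : Set G | ∃ γ ∈ Φ, ∃ δ ∈ Φ, γ + δ = c ∧ S = {γ, δ}}.ncard
      = (Φ.filter fun γ => c - γ ∈ Φ).card := by
  have hpairs : {S : Set G | ∃ γ ∈ Φ, ∃ δ ∈ Φ, γ + δ = c ∧ S = {γ, δ}}
      = (fun γ => ({γ, c - γ} : Set G)) '' ↑(Φ.filter fun γ => c - γ ∈ Φ) := by
    ext S
    simp only [Set.mem_ofPred_eq, Set.mem_image, Finset.coe_filter]
    constructor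
    · rintro ⟨γ, hγ, δ, hδ, rfl, rfl⟩
      exact ⟨γ, ⟨hγ, by rwa [add_sub_cancel_left]⟩, by rw [add_sub_cancel_left]⟩
    · rintro ⟨γ, ⟨hγ, hcγ⟩, rfl⟩
      exact ⟨γ, hγ, c - γ, hcγ, add_sub_cancel γ c, rfl⟩
  rw [hpairs]
  refine two_mul_ncard_image_pair_eq_card _ _ (fun γ hγ => ?_) (fun γ _ => sub_sub_cancel c γ)
    (fun γ hγ h => hfree γ (Finset.mem_filter.mp hγ).1 ?_)
  · obtain ⟨hγ, hcγ⟩ := Finset.mem_filter.mp hγ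
    exact Finset.mem_filter.mpr ⟨hcγ, by rwa [sub_sub_cancel]⟩
  · nth_rw 1 [← h]
    exact sub_add_cancel c γ

section RootSystem

variable {V : Type*} [NormedAddCommGroup V] [InnerProductSpace ℝ V] {Φ : Finset V}

theorem eq_of_two_le_inner {γ δ : V} (hγ : ⟪γ, γ⟫ = 2) (hδ : ⟪δ, δ⟫ = 2) (h : 2 ≤ ⟪γ, δ⟫) :
    γ = δ := by
  have hnonneg : 0 ≤ ⟪γ - δ, γ - δ⟫ := real_inner_self_nonneg
  have hexpand : ⟪γ - δ, γ - δ⟫ = ⟪γ, γ⟫ - 2 * ⟪γ, δ⟫ + ⟪δ, δ⟫ := by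
    rw [inner_sub_left, inner_sub_right, inner_sub_right, real_inner_comm δ γ]; ring
  have hzero : ⟪γ - δ, γ - δ⟫ = 0 := by linarith
  exact sub_eq_zero.mp (inner_self_eq_zero.mp hzero)

theorem add_self_ne_add_of_inner_eq_zero {α β γ : V} (hα : ⟪α, α⟫ = 2) (hβ : ⟪β, β⟫ = 2)
    (hγ : ⟪γ, γ⟫ = 2) (horth : ⟪α, β⟫ = 0) : γ + γ ≠ α + β := by
  intro h
  have := congrArg (fun v => ⟪v, v⟫) h
  simp only [inner_add_left, inner_add_right, hα, hβ, hγ, horth, real_inner_comm α β] at this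
  norm_num at this

theorem sub_mem_of_inner_eq_one (hrefl : ∀ α ∈ Φ, ∀ β ∈ Φ, β - ⟪β, α⟫ • α ∈ Φ) {γ δ : V}
    (hγ : γ ∈ Φ) (hδ : δ ∈ Φ) (h : ⟪γ, δ⟫ = 1) : γ - δ ∈ Φ := by
  simpa [h] using hrefl δ hδ γ hγ

theorem add_mem_of_inner_eq_neg_one (hrefl : ∀ α ∈ Φ, ∀ β ∈ Φ, β - ⟪β, α⟫ • α ∈ Φ) {γ δ : V}
    (hγ : γ ∈ Φ) (hδ : δ ∈ Φ) (h : ⟪γ, δ⟫ = -1) : γ + δ ∈ Φ := by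
  simpa [h] using hrefl δ hδ γ hγ

variable {α β : V}

theorem add_sub_mem_of_inner_eq_one (hrefl : ∀ α ∈ Φ, ∀ β ∈ Φ, β - ⟪β, α⟫ • α ∈ Φ)
    (hα : α ∈ Φ) (hβ : β ∈ Φ) (horth : ⟪α, β⟫ = 0) {γ : V} (hγ : γ ∈ Φ)
    (hαγ : ⟪α, γ⟫ = 1) (hβγ : ⟪β, γ⟫ = 1) : α + β - γ ∈ Φ := by
  have hγα : γ - α ∈ Φ := sub_mem_of_inner_eq_one hrefl hγ hα (by rwa [real_inner_comm])
  have hβγα : ⟪β, γ - α⟫ = 1 := by rw [inner_sub_right, hβγ, real_inner_comm, horth]; ring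
  have := sub_mem_of_inner_eq_one hrefl hβ hγα hβγα
  rwa [sub_sub_eq_add_sub, add_comm] at this

theorem eq_or_eq_or_inner_eq_one_of_add_sub_mem (hlen : ∀ α ∈ Φ, ⟪α, α⟫ = 2)
    (hint : ∀ α ∈ Φ, ∀ β ∈ Φ, ∃ n : ℤ, ⟪α, β⟫ = n) (hα : α ∈ Φ) (hβ : β ∈ Φ)
    (horth : ⟪α, β⟫ = 0) {γ : V} (hγ : γ ∈ Φ) (hδ : α + β - γ ∈ Φ) :
    γ = α ∨ γ = β ∨ (⟪α, γ⟫ = 1 ∧ ⟪β, γ⟫ = 1) := by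
  -- `‖α + β‖² = 4 = ‖γ‖² + ‖α + β - γ‖²` makes `γ` and `α + β - γ` orthogonal.
  have hsum : ⟪γ, α⟫ + ⟪γ, β⟫ = 2 := by
    have h := congrArg (fun v => ⟪v, v⟫) (sub_add_cancel (α + β) γ)
    have hcross := hlen _ hδ
    simp only [inner_add_left, inner_add_right, inner_sub_left, inner_sub_right, hlen α hα,
      hlen β hβ, hlen γ hγ, horth, real_inner_comm α β, real_inner_comm α γ,
      real_inner_comm β γ] at h hcross ⊢
    linarith
  obtain ⟨m, hm⟩ := hint γ hγ α hα
  obtain ⟨n, hn⟩ := hint γ hγ β hβ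
  rw [hm, hn] at hsum
  have hmn : m + n = 2 := by exact_mod_cast hsum
  rcases le_or_gt 2 m with h2m | hm1
  · exact .inl (eq_of_two_le_inner (hlen γ hγ) (hlen α hα) (by rw [hm]; exact_mod_cast h2m))
  rcases le_or_gt 2 n with h2n | hn1
  · exact .inr (.inl (eq_of_two_le_inner (hlen γ hγ) (hlen β hβ) (by rw [hn]; exact_mod_cast h2n)))
  have hm' : m = 1 := by omega
  have hn' : n = 1 := by omega
  refine .inr (.inr ⟨?_, ?_⟩)
  · rw [real_inner_comm, hm, hm']; norm_num
  · rw [real_inner_comm, hn, hn']; norm_num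

theorem card_filter_add_sub_mem [DecidableEq V] (hlen : ∀ α ∈ Φ, ⟪α, α⟫ = 2)
    (hint : ∀ α ∈ Φ, ∀ β ∈ Φ, ∃ n : ℤ, ⟪α, β⟫ = n)
    (hrefl : ∀ α ∈ Φ, ∀ β ∈ Φ, β - ⟪β, α⟫ • α ∈ Φ) (hα : α ∈ Φ) (hβ : β ∈ Φ)
    (horth : ⟪α, β⟫ = 0) :
    (Φ.filter fun γ => α + β - γ ∈ Φ).card
      = (Φ.filter fun γ => ⟪α, γ⟫ = 1 ∧ ⟪β, γ⟫ = 1).card + 2 := by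
  have hdecomp : (Φ.filter fun γ => α + β - γ ∈ Φ)
      = insert α (insert β (Φ.filter fun γ => ⟪α, γ⟫ = 1 ∧ ⟪β, γ⟫ = 1)) := by
    ext γ
    simp only [Finset.mem_filter, Finset.mem_insert]
    constructor
    · rintro ⟨hγ, hδ⟩
      rcases eq_or_eq_or_inner_eq_one_of_add_sub_mem hlen hint hα hβ horth hγ hδ with h | h | h
      exacts [.inl h, .inr (.inl h), .inr (.inr ⟨hγ, h⟩)]
    · rintro (rfl | rfl | ⟨hγ, hαγ, hβγ⟩)
      · exact ⟨hα, by rwa [add_sub_cancel_left]⟩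
      · exact ⟨hβ, by rwa [add_sub_cancel_right]⟩
      · exact ⟨hγ, add_sub_mem_of_inner_eq_one hrefl hα hβ horth hγ hαγ hβγ⟩
  have hαβ : α ≠ β := by
    rintro rfl
    rw [hlen α hα] at horth
    norm_num at horth
  rw [hdecomp, Finset.card_insert_of_notMem, Finset.card_insert_of_notMem]
  · rw [Finset.mem_filter]
    rintro ⟨-, -, hββ⟩
    rw [hlen β hβ] at hββ
    norm_num at hββ
  · rw [Finset.mem_insert, Finset.mem_filter]
    rintro (hαβ' | ⟨-, hαα, -⟩)
    · exact hαβ hαβ'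
    · rw [hlen α hα] at hαα
      norm_num at hαα

theorem card_filter_inner_eq_one_neg_one (hrefl : ∀ α ∈ Φ, ∀ β ∈ Φ, β - ⟪β, α⟫ • α ∈ Φ)
    (hβ : β ∈ Φ) (hββ : ⟪β, β⟫ = 2) (horth : ⟪α, β⟫ = 0) :
    (Φ.filter fun γ => ⟪α, γ⟫ = 1 ∧ ⟪β, γ⟫ = -1).card
      = (Φ.filter fun γ => ⟪α, γ⟫ = 1 ∧ ⟪β, γ⟫ = 1).card := by
  refine Finset.card_nbij' (· + β) (· - β) (fun γ hγ => ?_) (fun δ hδ => ?_)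
    (fun γ _ => add_sub_cancel_right γ β) (fun δ _ => sub_add_cancel δ β)
  · obtain ⟨hγ, hαγ, hβγ⟩ := Finset.mem_filter.mp hγ
    refine Finset.mem_filter.mpr ⟨add_mem_of_inner_eq_neg_one hrefl hγ hβ ?_, ?_, ?_⟩
    · rwa [real_inner_comm]
    · rw [inner_add_right, hαγ, horth]; ring
    · rw [inner_add_right, hβγ, hββ]; ring
  · obtain ⟨hδ, hαδ, hβδ⟩ := Finset.mem_filter.mp hδ
    refine Finset.mem_filter.mpr ⟨sub_mem_of_inner_eq_one hrefl hδ hβ ?_, ?_, ?_⟩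
    · rwa [real_inner_comm]
    · rw [inner_sub_right, hαδ, horth]; ring
    · rw [inner_sub_right, hβδ, hββ]; ring

end RootSystem

theorem card_filter_positive_eq_card_filter {V : Type*} [AddGroup V] {Φ Φp : Finset V}
    (hneg : ∀ α ∈ Φ, -α ∈ Φ) (hsub : Φp ⊆ Φ) (hsplit : ∀ α ∈ Φ, (α ∈ Φp ↔ -α ∉ Φp))
    (p : V → Prop) [DecidablePred p] (hp : ∀ γ, p γ → ¬ p (-γ)) :
    (Φp.filter fun γ => p γ ∨ p (-γ)).card = (Φ.filter p).card := by
  classical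
  refine Finset.card_nbij' (fun δ => if p δ then δ else -δ) (fun γ => if γ ∈ Φp then γ else -γ)
    (fun δ hδ => ?_) (fun γ hγ => ?_) (fun δ hδ => ?_) (fun γ hγ => ?_)
  · obtain ⟨hδ, hpδ⟩ := Finset.mem_filter.mp hδ
    by_cases h : p δ
    · simpa [h] using hsub hδ
    · simpa [h, hpδ.resolve_left h] using hneg δ (hsub hδ)
  · obtain ⟨hγ, hpγ⟩ := Finset.mem_filter.mp hγ
    by_cases h : γ ∈ Φp
    · simp [h, hpγ]
    · simpa [h, hpγ] using not_not.mp (mt (hsplit γ hγ).mpr h)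
  · obtain ⟨hδ, hpδ⟩ := Finset.mem_filter.mp hδ
    by_cases h : p δ
    · simp [h, hδ]
    · simp [h, (hsplit δ (hsub hδ)).mp hδ]
  · obtain ⟨hγ, hpγ⟩ := Finset.mem_filter.mp hγ
    by_cases h : γ ∈ Φp
    · simp [h, hpγ]
    · simp [h, hp γ hpγ]

theorem eq_neg_and_eq_one_or_eq_neg_one_iff (a b : ℝ) :
    (a = -b ∧ (a = 1 ∨ a = -1)) ↔ (a = 1 ∧ b = -1) ∨ (-a = 1 ∧ -b = -1) := by
  constructor
  · rintro ⟨hab, rfl | rfl⟩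
    exacts [.inl ⟨rfl, by linarith⟩, .inr ⟨by norm_num, by linarith⟩]
  · rintro (⟨rfl, rfl⟩ | ⟨ha, hb⟩)
    · norm_num
    · exact ⟨by linarith, .inr (by linarith)⟩

theorem count_positive_roots_orthogonal_pair_general (V : Type*) [NormedAddCommGroup V]
    [InnerProductSpace ℝ V]
    (Φ : Finset V)
    (hlen : ∀ α ∈ Φ, ⟪α, α⟫ = 2)
    (hneg : ∀ α ∈ Φ, -α ∈ Φ)
    (hint : ∀ α ∈ Φ, ∀ β ∈ Φ, ∃ n : ℤ, ⟪α, β⟫ = n)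
    (hrefl : ∀ α ∈ Φ, ∀ β ∈ Φ, β - ⟪β, α⟫ • α ∈ Φ)
    (Φp : Finset V) (hsub : Φp ⊆ Φ)
    (hsplit : ∀ α ∈ Φ, (α ∈ Φp ↔ -α ∉ Φp))
    (α β : V) (hα : α ∈ Φ) (hβ : β ∈ Φ) (horth : ⟪α, β⟫ = 0) :
    {γ : V | γ ∈ Φp ∧ ⟪α, γ⟫ = -⟪β, γ⟫ ∧ (⟪α, γ⟫ = 1 ∨ ⟪α, γ⟫ = -1)}.ncard
      = 2 * ({S : Set V | ∃ γ ∈ Φ, ∃ δ ∈ Φ, γ + δ = α + β ∧ S = {γ, δ}}.ncard - 1) := by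
  classical
  set p : V → Prop := fun γ => ⟪α, γ⟫ = 1 ∧ ⟪β, γ⟫ = -1
  have hp : ∀ γ, p γ → ¬ p (-γ) := by
    rintro γ ⟨hαγ, -⟩ ⟨hαγ', -⟩
    rw [inner_neg_right, hαγ] at hαγ'
    norm_num at hαγ'
  have hlhs : {γ : V | γ ∈ Φp ∧ ⟪α, γ⟫ = -⟪β, γ⟫ ∧ (⟪α, γ⟫ = 1 ∨ ⟪α, γ⟫ = -1)}
      = ↑(Φp.filter fun γ => p γ ∨ p (-γ)) := by
    ext γ
    simp only [p, Set.mem_ofPred_eq, Finset.coe_filter, inner_neg_right,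
      eq_neg_and_eq_one_or_eq_neg_one_iff]
  have hpairs := two_mul_ncard_pairs_add_eq Φ (α + β) fun γ hγ =>
    add_self_ne_add_of_inner_eq_zero (hlen α hα) (hlen β hβ) (hlen γ hγ) horth
  rw [card_filter_add_sub_mem hlen hint hrefl hα hβ horth] at hpairs
  rw [hlhs, Set.ncard_coe_finset, card_filter_positive_eq_card_filter hneg hsub hsplit p hp,
    card_filter_inner_eq_one_neg_one hrefl hβ (hlen β hβ) horth]
  omega

/-- In an irreducible simply laced root system with positive system `Φ⁺`, for
orthogonal roots `α, β`, the number of positive roots `γ` with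
`κ(α,γ) = -κ(β,γ) = ±1` equals `2(n_{α+β} - 1)`, where `n_{α+β}` is the
number of unordered pairs of roots summing to `α+β`. -/
theorem count_positive_roots_orthogonal_pair (V : Type*) [NormedAddCommGroup V]
    [InnerProductSpace ℝ V] [FiniteDimensional ℝ V]
    (Φ : Finset V)
    (h0 : (0 : V) ∉ Φ)
    (hlen : ∀ α ∈ Φ, ⟪α, α⟫ = 2)
    (hneg : ∀ α ∈ Φ, -α ∈ Φ)
    (hred : ∀ α ∈ Φ, ∀ t : ℝ, t • α ∈ Φ → t = 1 ∨ t = -1)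
    (hint : ∀ α ∈ Φ, ∀ β ∈ Φ, ∃ n : ℤ, ⟪α, β⟫ = n)
    (hrefl : ∀ α ∈ Φ, ∀ β ∈ Φ, β - ⟪β, α⟫ • α ∈ Φ)
    (hirr : ∀ S ⊆ Φ, (∀ a ∈ S, ∀ b ∈ Φ, b ∉ S → ⟪a, b⟫ = 0) → S = ∅ ∨ S = Φ)
    (Φp : Finset V) (hsub : Φp ⊆ Φ)
    (hsplit : ∀ α ∈ Φ, (α ∈ Φp ↔ -α ∉ Φp))
    (hclosed : ∀ α ∈ Φp, ∀ β ∈ Φp, α + β ∈ Φ → α + β ∈ Φp)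
    (α β : V) (hα : α ∈ Φ) (hβ : β ∈ Φ) (horth : ⟪α, β⟫ = 0) :
    {γ : V | γ ∈ Φp ∧ ⟪α, γ⟫ = -⟪β, γ⟫ ∧ (⟪α, γ⟫ = 1 ∨ ⟪α, γ⟫ = -1)}.ncard
      = 2 * ({S : Set V | ∃ γ ∈ Φ, ∃ δ ∈ Φ, γ + δ = α + β ∧ S = {γ, δ}}.ncard - 1) :=
  count_positive_roots_orthogonal_pair_general V Φ hlen hneg hint hrefl Φp hsub hsplit α β hα hβ
    horth
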